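/- arXiv:2210.16026 — 2 statements merged into one kernel-verified Lean document; each statement's English description precedes it below -/
import Mathlib

section
/- The metric space (D, d̂_{J1}) is complete: every Cauchy sequence for d̂_{J1} converges in D. -/
open Set Filter Topology

noncomputable section

/-- The unit interval `[0,1] ⊆ ℝ`, as a type. -/
abbrev unitI : Type := ↥(Set.Icc (0:ℝ) 1)

/-- The point `0` of the unit interval. -/
def i0 : unitI := ⟨0, by norm_num⟩

/-- The point `1` of the unit interval. -/
def i1 : unitI := ⟨1, by norm_num⟩

/-- A function `f : [0,1] → ℝ` is càdlàg if it is right-continuous at every point and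
has a left limit at every point (both conditions being vacuous where the corresponding
one-sided neighbourhood filter is trivial). -/
def Cadlag (f : unitI → ℝ) : Prop :=
  (∀ t : unitI, Tendsto f (𝓝[>] t) (𝓝 (f t))) ∧
  (∀ t : unitI, ∃ L : ℝ, Tendsto f (𝓝[<] t) (𝓝 L))

/-- The Skorokhod space `D` of càdlàg functions `[0,1] → ℝ`. -/
def D : Type := {f : unitI → ℝ // Cadlag f}

/-- A time change: a strictly increasing bijection `λ : [0,1] → [0,1]`. -/
def TimeChange (l : unitI → unitI) : Prop := StrictMono l ∧ Function.Bijective l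

/-- The Skorokhod `J₁` metric
`d_{J1}(f,g) = inf_λ ( sup_t |f(λ t) - g t| + sup_t |λ t - t| )`. -/
def dJ1 (f g : D) : ℝ :=
  sInf {x : ℝ | ∃ l : unitI → unitI, TimeChange l ∧
    x = (⨆ t : unitI, |f.1 (l t) - g.1 t|) + ⨆ t : unitI, |(l t : ℝ) - (t : ℝ)|}

/-- The penalty `‖λ‖∘ = sup_{s ≠ t} |log((λ t - λ s)/(t - s))|`, possibly `+∞`. -/
def normCirc (l : unitI → unitI) : ENNReal :=
  ⨆ s : unitI, ⨆ t : unitI, ⨆ _ : s ≠ t,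
    ENNReal.ofReal |Real.log ((((l t : ℝ) - (l s : ℝ))) / ((t : ℝ) - (s : ℝ)))|

/-- The modified Skorokhod metric
`d̂_{J1}(f,g) = inf_λ ( sup_t |f(λ t) - g t| + ‖λ‖∘ )`. -/
def dJ1hat (f g : D) : ℝ :=
  (⨅ l : unitI → unitI, ⨅ _ : TimeChange l,
    (ENNReal.ofReal (⨆ t : unitI, |f.1 (l t) - g.1 t|) + normCirc l)).toReal

/-!
`d̂_{J1}` is a pseudometric: time changes compose and invert, and `‖·‖∘` is subadditive under
composition and invariant under inversion. For completeness it suffices to treat a sequence `u`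
with `d̂(u (k+1), u k) < 2⁻ᵏ`, realised by time changes `l k` with `‖l k‖∘ ≤ 2⁻ᵏ` and
`|u (k+1) ∘ l k - u k| ≤ 2⁻ᵏ`. Since `‖λ‖∘ ≤ η` forces `|λ t - t| ≤ exp η - 1`, the compositions
`l (k+m-1) ∘ ⋯ ∘ l k` converge as `m → ∞` to time changes `μ k` with `‖μ k‖∘ ≤ 2¹⁻ᵏ` and
`μ (k+1) ∘ l k = μ k`. Hence the càdlàg functions `u k ∘ (μ k)⁻¹` form a uniformly Cauchy
sequence; its uniform limit is càdlàg, and `(μ k)⁻¹` witnesses that it is the `d̂`-limit of `u`.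
-/

lemma i0_le (t : unitI) : i0 ≤ t := t.2.1

lemma le_i1 (t : unitI) : t ≤ i1 := t.2.2

lemma i0_lt_i1 : i0 < i1 := by simp [i0, i1]

@[simp] lemma coe_i0 : ((i0 : unitI) : ℝ) = 0 := rfl

lemma Real.abs_log_div_le_iff {a b η : ℝ} (ha : 0 < a) (hb : 0 < b) :
    |Real.log (b / a)| ≤ η ↔ Real.exp (-η) * a ≤ b ∧ b ≤ Real.exp η * a := by
  rw [abs_le, neg_le, ← neg_le_neg_iff, neg_neg, Real.le_log_iff_exp_le (div_pos hb ha),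
    Real.log_le_iff_le_exp (div_pos hb ha), le_div_iff₀ ha, div_le_iff₀ ha]

/-- For strictly monotone `l` this is `‖l‖∘ ≤ η` (`normCirc_le_ofReal_iff`), in a form that is
stable under composition, inversion and pointwise limits. -/
def LogSlopeLE (l : unitI → unitI) (η : ℝ) : Prop :=
  ∀ s t : unitI, s ≤ t →
    Real.exp (-η) * (t - s) ≤ l t - l s ∧ (l t : ℝ) - l s ≤ Real.exp η * (t - s)

namespace LogSlopeLE

variable {l m : unitI → unitI} {η η' : ℝ}

lemma monotone (h : LogSlopeLE l η) : Monotone l := fun s t hst =>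
  Subtype.coe_le_coe.1 <| sub_nonneg.1 <|
    (mul_nonneg (Real.exp_pos _).le (sub_nonneg.2 hst)).trans (h s t hst).1

lemma strictMono (h : LogSlopeLE l η) : StrictMono l := fun s t hst =>
  Subtype.coe_lt_coe.1 <| sub_pos.1 <|
    (mul_pos (Real.exp_pos _) (sub_pos.2 hst)).trans_le (h s t hst.le).1

lemma nonneg (h : LogSlopeLE l η) : 0 ≤ η := by
  have h01 : (0 : ℝ) < (i1 : ℝ) - i0 := sub_pos.2 i0_lt_i1
  obtain ⟨hlo, hhi⟩ := h i0 i1 i0_lt_i1.le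
  have := le_of_mul_le_mul_right (hlo.trans hhi) h01
  linarith [Real.exp_le_exp.1 this]

lemma mono (h : LogSlopeLE l η) (hηη' : η ≤ η') : LogSlopeLE l η' := fun s t hst => by
  have hts : (0 : ℝ) ≤ t - s := sub_nonneg.2 hst
  obtain ⟨hlo, hhi⟩ := h s t hst
  exact ⟨le_trans (by gcongr) hlo, hhi.trans (by gcongr)⟩

lemma comp (hl : LogSlopeLE l η) (hm : LogSlopeLE m η') : LogSlopeLE (l ∘ m) (η + η') :=
  fun s t hst => by
  obtain ⟨hlo, hhi⟩ := hl (m s) (m t) (hm.monotone hst)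
  obtain ⟨hlo', hhi'⟩ := hm s t hst
  simp only [Function.comp_apply, neg_add, Real.exp_add, mul_assoc]
  exact ⟨(mul_le_mul_of_nonneg_left hlo' (Real.exp_pos _).le).trans hlo,
    hhi.trans (mul_le_mul_of_nonneg_left hhi' (Real.exp_pos _).le)⟩

lemma rightInverse (h : LogSlopeLE l η) (hm : Function.RightInverse m l) : LogSlopeLE m η :=
  fun s t hst => by
  have hmst : m s ≤ m t := h.strictMono.le_iff_le.1 (by rwa [hm s, hm t])
  obtain ⟨hlo, hhi⟩ := h (m s) (m t) hmst
  rw [hm s, hm t] at hlo hhi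
  constructor
  · calc Real.exp (-η) * (t - s) ≤ Real.exp (-η) * (Real.exp η * (m t - m s)) := by gcongr
      _ = m t - m s := by rw [Real.exp_neg, inv_mul_cancel_left₀ (Real.exp_pos η).ne']
  · calc (m t : ℝ) - m s = Real.exp η * (Real.exp (-η) * (m t - m s)) := by
          rw [Real.exp_neg, mul_inv_cancel_left₀ (Real.exp_pos η).ne']
      _ ≤ Real.exp η * (t - s) := by gcongr

lemma dist_le (h : LogSlopeLE l η) (s t : unitI) : dist (l s) (l t) ≤ Real.exp η * dist s t := by
  wlog hst : s ≤ t generalizing s t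
  · rw [dist_comm, dist_comm s]; exact this t s (le_of_not_ge hst)
  rw [dist_comm, dist_comm s, Subtype.dist_eq, Subtype.dist_eq, Real.dist_eq, Real.dist_eq,
    abs_of_nonneg (sub_nonneg.2 (Subtype.coe_le_coe.2 (h.monotone hst))),
    abs_of_nonneg (sub_nonneg.2 (Subtype.coe_le_coe.2 hst))]
  exact (h s t hst).2

lemma continuous (h : LogSlopeLE l η) : Continuous l :=
  (LipschitzWith.of_dist_le' h.dist_le).continuous

lemma abs_apply_sub_le (h : LogSlopeLE l η) (h0 : l i0 = i0) (t : unitI) :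
    |(l t : ℝ) - t| ≤ Real.exp η - 1 := by
  obtain ⟨hlo, hhi⟩ := h i0 t (i0_le t)
  rw [h0, coe_i0, sub_zero, sub_zero] at hlo hhi
  have ht1 : 0 ≤ 1 - (t : ℝ) := sub_nonneg.2 t.2.2
  have hexp : 1 - Real.exp (-η) ≤ Real.exp η - 1 := by
    linarith [Real.add_one_le_exp η, Real.add_one_le_exp (-η)]
  have hexp_neg : 0 ≤ 1 - Real.exp (-η) :=
    sub_nonneg.2 (Real.exp_le_one_iff.2 (neg_nonpos.2 h.nonneg))
  have hexp_pos : 0 ≤ Real.exp η - 1 := sub_nonneg.2 (Real.one_le_exp h.nonneg)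
  rw [abs_le]
  constructor <;> linarith [mul_nonneg hexp_neg ht1, mul_nonneg hexp_pos ht1]

lemma of_tendsto {ι : Type*} {p : Filter ι} [p.NeBot] {φ : ι → unitI → unitI}
    (hφ : ∀ i, LogSlopeLE (φ i) η) (hl : ∀ t, Tendsto (fun i => φ i t) p (𝓝 (l t))) :
    LogSlopeLE l η := fun s t hst => by
  have hlim : Tendsto (fun i => (φ i t : ℝ) - φ i s) p (𝓝 ((l t : ℝ) - l s)) :=
    ((continuous_subtype_val.tendsto _).comp (hl t)).sub
      ((continuous_subtype_val.tendsto _).comp (hl s))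
  exact ⟨ge_of_tendsto hlim (Eventually.of_forall fun i => (hφ i s t hst).1),
    le_of_tendsto hlim (Eventually.of_forall fun i => (hφ i s t hst).2)⟩

end LogSlopeLE

lemma logSlopeLE_id : LogSlopeLE id 0 := fun s t _ => by simp

lemma timeChange_id : TimeChange id := ⟨strictMono_id, Function.bijective_id⟩

namespace TimeChange

variable {l m : unitI → unitI}

lemma comp (hl : TimeChange l) (hm : TimeChange m) : TimeChange (l ∘ m) :=
  ⟨hl.1.comp hm.1, hl.2.comp hm.2⟩

def orderIso (hl : TimeChange l) : unitI ≃o unitI := StrictMono.orderIsoOfSurjective l hl.1 hl.2.2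

lemma apply_symm_apply (hl : TimeChange l) (t : unitI) : l (hl.orderIso.symm t) = t :=
  hl.orderIso.apply_symm_apply t

lemma symm_apply_apply (hl : TimeChange l) (t : unitI) : hl.orderIso.symm (l t) = t :=
  hl.orderIso.symm_apply_apply t

lemma symm (hl : TimeChange l) : TimeChange hl.orderIso.symm :=
  ⟨hl.orderIso.symm.strictMono, hl.orderIso.symm.bijective⟩

lemma continuous (hl : TimeChange l) : Continuous l := hl.orderIso.continuous

lemma map_i0 (hl : TimeChange l) : l i0 = i0 := hl.orderIso.map_bot

lemma map_i1 (hl : TimeChange l) : l i1 = i1 := hl.orderIso.map_top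

lemma of_logSlopeLE {η : ℝ} (h : LogSlopeLE l η) (h0 : l i0 = i0) (h1 : l i1 = i1) :
    TimeChange l := by
  refine ⟨h.strictMono, h.strictMono.injective, fun y => ?_⟩
  obtain ⟨s, -, hs⟩ := intermediate_value_Icc (i0_le i1) h.continuous.continuousOn
    (by rw [h0, h1]; exact ⟨i0_le y, le_i1 y⟩)
  exact ⟨s, hs⟩

lemma of_tendsto {ι : Type*} {p : Filter ι} [p.NeBot] {φ : ι → unitI → unitI} {η : ℝ}
    (hφ : ∀ i, TimeChange (φ i)) (hη : ∀ i, LogSlopeLE (φ i) η)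
    (hl : ∀ t, Tendsto (fun i => φ i t) p (𝓝 (l t))) : TimeChange l ∧ LogSlopeLE l η := by
  have hfix (t : unitI) (ht : ∀ i, φ i t = t) : l t = t :=
    tendsto_nhds_unique (hl t) (by simp only [ht]; exact tendsto_const_nhds)
  have hlη := LogSlopeLE.of_tendsto hη hl
  exact ⟨of_logSlopeLE hlη (hfix i0 fun i => (hφ i).map_i0) (hfix i1 fun i => (hφ i).map_i1),
    hlη⟩

end TimeChange

lemma Cadlag.comp {f : unitI → ℝ} {l : unitI → unitI} (hf : Cadlag f) (hl : TimeChange l) :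
    Cadlag (f ∘ l) := by
  have hmaps (t : unitI) {s s' : Set unitI} (hs : MapsTo l s s') :
      Tendsto l (𝓝[s] t) (𝓝[s'] (l t)) :=
    hl.continuous.continuousWithinAt.tendsto_nhdsWithin hs
  refine ⟨fun t => (hf.1 (l t)).comp (hmaps t fun _ hs => hl.1 hs), fun t => ?_⟩
  obtain ⟨L, hL⟩ := hf.2 (l t)
  exact ⟨L, hL.comp (hmaps t fun _ hs => hl.1 hs)⟩

lemma Cadlag.exists_forall_abs_le {f : unitI → ℝ} (hf : Cadlag f) : ∃ M, ∀ t, |f t| ≤ M := by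
  have hloc (t : unitI) : IsBoundedUnder (· ≤ ·) (𝓝 t) fun s => |f s| := by
    obtain ⟨L, hL⟩ := hf.2 t
    rw [← nhdsNE_sup_pure, ← nhdsLT_sup_nhdsGT]
    simp only [IsBoundedUnder, map_sup]
    exact isBounded_sup (isBounded_sup hL.abs.isBoundedUnder_le (hf.1 t).abs.isBoundedUnder_le)
      (tendsto_pure_nhds _ t).isBoundedUnder_le
  obtain ⟨M, hM⟩ : BddAbove (range fun t => |f t|) := by
    rw [← image_univ]
    refine isCompact_univ.induction_on (p := fun s => BddAbove ((fun t => |f t|) '' s))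
      (by simp) (fun s t hst ht => ht.mono (image_mono hst))
      (fun s t hs ht => by rw [image_union]; exact hs.union ht) fun t _ => ?_
    obtain ⟨M, hM⟩ := hloc t
    exact ⟨{s | |f s| ≤ M}, mem_nhdsWithin_of_mem_nhds hM, M, by rintro _ ⟨s, hs, rfl⟩; exact hs⟩
  exact ⟨M, fun t => hM (mem_range_self t)⟩

lemma Cadlag.of_tendstoUniformly {h : ℕ → unitI → ℝ} {f : unitI → ℝ} (hh : ∀ k, Cadlag (h k))
    (hf : TendstoUniformly h f atTop) : Cadlag f := by
  refine ⟨fun t => hf.tendsto_of_eventually_tendsto (Eventually.of_forall fun k => (hh k).1 t)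
    (hf.tendsto_at t), fun t => ?_⟩
  rcases (𝓝[<] t).eq_or_neBot with hbot | _
  · exact ⟨0, by rw [hbot]; exact tendsto_bot⟩
  choose L hL using fun k => (hh k).2 t
  -- `|L n - L N| ≤ sup |h n - h N|`, so the left limits converge along with the `h k`.
  have hLcauchy : CauchySeq L := Metric.cauchySeq_iff'.2 fun ε hε => by
    obtain ⟨N, hN⟩ := Metric.uniformCauchySeqOn_iff.1
      (tendstoUniformlyOn_univ.2 hf).uniformCauchySeqOn (ε / 2) (half_pos hε)
    refine ⟨N, fun n hn => ?_⟩
    have := le_of_tendsto ((hL n).dist (hL N))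
      (Eventually.of_forall fun s => (hN n hn N le_rfl s (mem_univ s)).le)
    linarith
  obtain ⟨ℓ, hℓ⟩ := cauchySeq_tendsto_of_complete hLcauchy
  exact ⟨ℓ, hf.tendsto_of_eventually_tendsto (Eventually.of_forall hL) hℓ⟩

lemma normCirc_le_ofReal_iff {l : unitI → unitI} {η : ℝ} (hl : StrictMono l) (hη : 0 ≤ η) :
    normCirc l ≤ ENNReal.ofReal η ↔ LogSlopeLE l η := by
  have key (s t : unitI) (hst : s < t) := Real.abs_log_div_le_iff (η := η)
    (sub_pos.2 (Subtype.coe_lt_coe.2 hst)) (sub_pos.2 (Subtype.coe_lt_coe.2 (hl hst)))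
  simp only [normCirc, iSup_le_iff, ENNReal.ofReal_le_ofReal_iff hη]
  constructor
  · intro h s t hst
    rcases hst.eq_or_lt with rfl | hst
    · simp
    · exact (key s t hst).1 (h s t hst.ne)
  · intro h s t hst
    rcases hst.lt_or_gt with hst | hst
    · exact (key s t hst).2 (h s t hst.le)
    · rw [← neg_div_neg_eq, neg_sub, neg_sub]
      exact (key t s hst).2 (h t s hst.le)

lemma normCirc_id : normCirc id = 0 := by
  simpa using (normCirc_le_ofReal_iff strictMono_id le_rfl).2 logSlopeLE_id

lemma bddAbove_range_abs_sub (f g : D) (l : unitI → unitI) :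
    BddAbove (range fun t => |f.1 (l t) - g.1 t|) := by
  obtain ⟨M, hM⟩ := f.2.exists_forall_abs_le
  obtain ⟨M', hM'⟩ := g.2.exists_forall_abs_le
  exact ⟨M + M', by rintro _ ⟨t, rfl⟩; exact (abs_sub _ _).trans (add_le_add (hM _) (hM' t))⟩

lemma dJ1hat_le {f g : D} {l : unitI → unitI} {c η : ℝ} (hl : TimeChange l) (hη : LogSlopeLE l η)
    (hc : ∀ t, |f.1 (l t) - g.1 t| ≤ c) : dJ1hat f g ≤ c + η := by
  have hc0 : 0 ≤ c := (abs_nonneg _).trans (hc i0)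
  refine ENNReal.toReal_le_of_le_ofReal (add_nonneg hc0 hη.nonneg) ((iInf₂_le l hl).trans ?_)
  rw [ENNReal.ofReal_add hc0 hη.nonneg]
  exact add_le_add (ENNReal.ofReal_le_ofReal (ciSup_le hc))
    ((normCirc_le_ofReal_iff hl.1 hη.nonneg).2 hη)

lemma exists_timeChange_of_dJ1hat_lt {f g : D} {ε : ℝ} (h : dJ1hat f g < ε) :
    ∃ l η, TimeChange l ∧ LogSlopeLE l η ∧ ∀ t, |f.1 (l t) - g.1 t| ≤ ε - η := by
  have hfin : (⨅ l : unitI → unitI, ⨅ _ : TimeChange l,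
      (ENNReal.ofReal (⨆ t : unitI, |f.1 (l t) - g.1 t|) + normCirc l)) ≠ ⊤ :=
    ne_top_of_le_ne_top (by simp [normCirc_id]) (iInf₂_le id timeChange_id)
  rw [dJ1hat, ← ENNReal.lt_ofReal_iff_toReal_lt hfin] at h
  simp only [iInf_lt_iff] at h
  obtain ⟨l, hl, hlt⟩ := h
  have hS : 0 ≤ ⨆ t : unitI, |f.1 (l t) - g.1 t| := Real.iSup_nonneg fun _ => abs_nonneg _
  have hcirc : normCirc l ≠ ⊤ := ne_top_of_lt (lt_of_le_of_lt le_add_self hlt)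
  rw [← ENNReal.ofReal_toReal hcirc, ← ENNReal.ofReal_add hS ENNReal.toReal_nonneg,
    ENNReal.ofReal_lt_ofReal_iff'] at hlt
  refine ⟨l, (normCirc l).toReal, hl, (normCirc_le_ofReal_iff hl.1 ENNReal.toReal_nonneg).1
    (ENNReal.ofReal_toReal hcirc).ge, fun t => ?_⟩
  -- An unbounded `⨆` in `ℝ` would be `0`: this is where càdlàg functions being bounded is used.
  linarith [le_ciSup (bddAbove_range_abs_sub f g l) t]

lemma dJ1hat_self (f : D) : dJ1hat f f = 0 :=
  le_antisymm (by simpa using dJ1hat_le timeChange_id logSlopeLE_id (c := 0) (by simp))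
    ENNReal.toReal_nonneg

lemma dJ1hat_comm_le (f g : D) : dJ1hat g f ≤ dJ1hat f g := by
  refine le_of_forall_gt_imp_ge_of_dense fun ε hε => ?_
  obtain ⟨l, η, hl, hη, hlε⟩ := exists_timeChange_of_dJ1hat_lt hε
  calc dJ1hat g f ≤ (ε - η) + η :=
        dJ1hat_le hl.symm (hη.rightInverse hl.apply_symm_apply) fun t => by
          simpa [abs_sub_comm, hl.apply_symm_apply] using hlε (hl.orderIso.symm t)
    _ = ε := by ring

lemma dJ1hat_comm (f g : D) : dJ1hat f g = dJ1hat g f :=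
  le_antisymm (dJ1hat_comm_le g f) (dJ1hat_comm_le f g)

lemma dJ1hat_triangle (f g h : D) : dJ1hat f h ≤ dJ1hat f g + dJ1hat g h := by
  refine le_of_forall_pos_le_add fun ε hε => ?_
  obtain ⟨l, η, hl, hη, hfg⟩ :=
    exists_timeChange_of_dJ1hat_lt (lt_add_of_pos_right (dJ1hat f g) (half_pos hε))
  obtain ⟨l', η', hl', hη', hgh⟩ :=
    exists_timeChange_of_dJ1hat_lt (lt_add_of_pos_right (dJ1hat g h) (half_pos hε))
  calc dJ1hat f h ≤ ((dJ1hat f g + ε / 2 - η) + (dJ1hat g h + ε / 2 - η')) + (η + η') :=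
        dJ1hat_le (hl.comp hl') (hη.comp hη') fun t =>
          (abs_sub_le _ (g.1 (l' t)) _).trans (add_le_add (hfg (l' t)) (hgh t))
    _ = dJ1hat f g + dJ1hat g h + ε := by ring

instance : PseudoMetricSpace D where
  dist := dJ1hat
  dist_self := dJ1hat_self
  dist_comm := dJ1hat_comm
  dist_triangle := dJ1hat_triangle

def compFrom (l : ℕ → unitI → unitI) (k : ℕ) : ℕ → unitI → unitI
  | 0 => id
  | m + 1 => l (k + m) ∘ compFrom l k m

lemma compFrom_succ' (l : ℕ → unitI → unitI) (k m : ℕ) :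
    compFrom l k (m + 1) = compFrom l (k + 1) m ∘ l k := by
  induction m with
  | zero => rfl
  | succ m ih =>
    rw [compFrom, ih, compFrom, Nat.add_right_comm k 1 m, Nat.add_assoc]
    rfl

section compFrom

variable {l : ℕ → unitI → unitI}

lemma timeChange_compFrom (hl : ∀ k, TimeChange (l k)) (k m : ℕ) :
    TimeChange (compFrom l k m) := by
  induction m with
  | zero => exact timeChange_id
  | succ m ih => exact (hl (k + m)).comp ih

lemma logSlopeLE_compFrom (hη : ∀ k, LogSlopeLE (l k) (1 / 2 ^ k)) (k m : ℕ) :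
    LogSlopeLE (compFrom l k m) (2 / 2 ^ k) := by
  suffices LogSlopeLE (compFrom l k m) (2 / 2 ^ k - 2 / 2 ^ (k + m)) from
    this.mono (sub_le_self _ (by positivity))
  induction m with
  | zero => simpa [compFrom] using logSlopeLE_id
  | succ m ih =>
    refine ((hη (k + m)).comp ih).mono (le_of_eq ?_)
    rw [← add_assoc, pow_succ]
    ring

lemma dist_compFrom_succ_le (hl : ∀ k, TimeChange (l k))
    (hη : ∀ k, LogSlopeLE (l k) (1 / 2 ^ k)) (k m : ℕ) (t : unitI) :
    dist (compFrom l k m t) (compFrom l k (m + 1) t) ≤ 4 / 2 / 2 ^ m := by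
  have hb : |(1 : ℝ) / 2 ^ (k + m)| ≤ 1 := by
    rw [abs_of_pos (by positivity)]
    exact div_le_one_of_le₀ (one_le_pow₀ one_le_two) (by positivity)
  rw [dist_comm, Subtype.dist_eq, Real.dist_eq]
  calc |(l (k + m) (compFrom l k m t) : ℝ) - compFrom l k m t|
      ≤ Real.exp (1 / 2 ^ (k + m)) - 1 := (hη (k + m)).abs_apply_sub_le (hl (k + m)).map_i0 _
    _ ≤ 2 * (1 / 2 ^ (k + m)) := (le_abs_self _).trans <|
        (Real.abs_exp_sub_one_le hb).trans_eq (by rw [abs_of_pos (by positivity)])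
    _ ≤ 2 * (1 / (1 * 2 ^ m)) := by
        rw [pow_add]; gcongr; exact one_le_pow₀ one_le_two
    _ = 4 / 2 / 2 ^ m := by ring

lemma exists_limit_compFrom (hl : ∀ k, TimeChange (l k))
    (hη : ∀ k, LogSlopeLE (l k) (1 / 2 ^ k)) :
    ∃ μ : ℕ → unitI → unitI, ∀ k, TimeChange (μ k) ∧ LogSlopeLE (μ k) (2 / 2 ^ k) ∧
      ∀ t, μ (k + 1) (l k t) = μ k t := by
  have hcauchy (k : ℕ) (t : unitI) : CauchySeq fun m => compFrom l k m t :=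
    cauchySeq_of_le_geometric_two (dist_compFrom_succ_le hl hη k · t)
  choose μ hμ using fun k t => cauchySeq_tendsto_of_complete (hcauchy k t)
  refine ⟨μ, fun k => ?_⟩
  obtain ⟨hμk, hμη⟩ :=
    TimeChange.of_tendsto (timeChange_compFrom hl k) (logSlopeLE_compFrom hη k) (hμ k)
  refine ⟨hμk, hμη, fun t => tendsto_nhds_unique (hμ (k + 1) (l k t)) ?_⟩
  have h := (hμ k t).comp (tendsto_add_atTop_nat 1)
  simpa only [Function.comp_def, compFrom_succ', Function.comp_apply] using h

end compFrom

lemma tendsto_div_two_pow (C : ℝ) : Tendsto (fun k : ℕ => C / 2 ^ k) atTop (𝓝 0) := by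
  simpa [div_eq_mul_inv] using
    (tendsto_pow_atTop_nhds_zero_of_lt_one (by norm_num : (0 : ℝ) ≤ 2⁻¹) (by norm_num)).const_mul C

lemma exists_forall_dist_le_of_le_geometric_two {α β : Type*} [PseudoMetricSpace β]
    [CompleteSpace β] {h : ℕ → α → β} {C : ℝ}
    (hh : ∀ k a, dist (h k a) (h (k + 1) a) ≤ C / 2 / 2 ^ k) :
    ∃ F : α → β, ∀ k a, dist (h k a) (F a) ≤ C / 2 ^ k := by
  choose F hF using fun a =>
    cauchySeq_tendsto_of_complete (cauchySeq_of_le_geometric_two (hh · a))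
  exact ⟨F, fun k a => dist_le_of_le_geometric_two_of_tendsto (hh · a) (hF a) k⟩

lemma exists_timeChanges_of_dJ1hat_succ_lt {u : ℕ → D}
    (hu : ∀ k, dJ1hat (u (k + 1)) (u k) < 1 / 2 ^ k) :
    ∃ φ : ℕ → unitI → unitI, ∀ k, TimeChange (φ k) ∧ LogSlopeLE (φ k) (2 / 2 ^ k) ∧
      ∀ t, |(u (k + 1)).1 (φ (k + 1) t) - (u k).1 (φ k t)| ≤ 1 / 2 ^ k := by
  choose l η hl hη hclose using fun k => exists_timeChange_of_dJ1hat_lt (hu k)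
  have hη_le (k : ℕ) : η k ≤ 1 / 2 ^ k := by
    linarith [hclose k i0, abs_nonneg ((u (k + 1)).1 (l k i0) - (u k).1 i0)]
  obtain ⟨μ, hμ⟩ := exists_limit_compFrom hl fun k => (hη k).mono (hη_le k)
  set φ := fun k => ((hμ k).1.orderIso.symm : unitI → unitI)
  have hshift (k : ℕ) (t : unitI) : φ (k + 1) t = l k (φ k t) := calc
    φ (k + 1) t = φ (k + 1) (μ (k + 1) (l k (φ k t))) := by
      rw [(hμ k).2.2, (hμ k).1.apply_symm_apply]
    _ = l k (φ k t) := (hμ (k + 1)).1.symm_apply_apply _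
  refine ⟨φ, fun k => ⟨(hμ k).1.symm, (hμ k).2.1.rightInverse (hμ k).1.apply_symm_apply,
    fun t => ?_⟩⟩
  rw [hshift]
  linarith [hclose k (φ k t), (hη k).nonneg]

lemma exists_tendsto_of_dJ1hat_succ_lt {u : ℕ → D}
    (hu : ∀ k, dJ1hat (u (k + 1)) (u k) < 1 / 2 ^ k) : ∃ F : D, Tendsto u atTop (𝓝 F) := by
  obtain ⟨φ, hφ⟩ := exists_timeChanges_of_dJ1hat_succ_lt hu
  obtain ⟨F, hF⟩ := exists_forall_dist_le_of_le_geometric_two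
    (h := fun k t => (u k).1 (φ k t)) (C := 2) fun k t => by
      rw [Real.dist_eq, abs_sub_comm]
      convert (hφ k).2.2 t using 1
      ring
  have hunif : TendstoUniformly (fun k t => (u k).1 (φ k t)) F atTop :=
    Metric.tendstoUniformly_iff.2 fun ε hε =>
      ((tendsto_div_two_pow 2).eventually (gt_mem_nhds hε)).mono fun k hk t => by
        rw [dist_comm]; exact (hF k t).trans_lt hk
  refine ⟨⟨F, .of_tendstoUniformly (fun k => (u k).2.comp (hφ k).1) hunif⟩,
    tendsto_iff_dist_tendsto_zero.2 <| squeeze_zero (fun _ => dist_nonneg) (fun k => ?_)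
      (by simpa using (tendsto_div_two_pow 2).add (tendsto_div_two_pow 2))⟩
  exact dJ1hat_le (hφ k).1 (hφ k).2.1 fun t => (Real.dist_eq _ _).symm.trans_le (hF k t)

instance : CompleteSpace D :=
  Metric.complete_of_convergent_controlled_sequences (fun k => 1 / 2 ^ k) (fun _ => by positivity)
    fun u hu => exists_tendsto_of_dJ1hat_succ_lt fun k => hu k (k + 1) k k.le_succ le_rfl

/-- The metric space `(D, d̂_{J1})` is complete: every Cauchy sequence
for `d̂_{J1}` converges to some element of `D`. -/
theorem dJ1hat_complete
    (F : ℕ → D)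
    (hF : ∀ ε : ℝ, 0 < ε → ∃ N, ∀ m n, N ≤ m → N ≤ n → dJ1hat (F m) (F n) < ε) :
    ∃ f : D, Tendsto (fun n => dJ1hat (F n) f) atTop (𝓝 0) := by
  have hcauchy : CauchySeq F := Metric.cauchySeq_iff.2 fun ε hε => by
    obtain ⟨N, hN⟩ := hF ε hε
    exact ⟨N, fun m hm n hn => hN m n hm hn⟩
  obtain ⟨f, hf⟩ := cauchySeq_tendsto_of_complete hcauchy
  exact ⟨f, tendsto_iff_dist_tendsto_zero.1 hf⟩
end
end

section
/- The metric space (D, d_{J1}) is separable: there exists a countable subset of D that is dense for the metric d_{J1}. -/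
open Set Filter Topology

noncomputable section

/-! A càdlàg function has oscillation less than `ε` on the cells `[u i, u (i + 1))` of some
finite partition of `[0, 1]`: the supremum of the points up to which such a partition exists is
reached thanks to the left limit there, and equals `1` by right continuity. So the function is
uniformly `ε`-close to a step function. A piecewise linear time change moving the nodes of the
partition to nearby rationals, together with rounding the values, shows that step functions
with rational nodes and values, a countable family, are dense for `d_{J1}`. -/

theorem Nat.exists_lt_and_not_succ {p : ℕ → Prop} {N : ℕ} (h0 : p 0) (hN : ¬p N) :
    ∃ i < N, p i ∧ ¬p (i + 1) := by
  induction N with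
  | zero => exact absurd h0 hN
  | succ n ih =>
    by_cases hn : p n
    · exact ⟨n, n.lt_succ_self, hn, hN⟩
    · obtain ⟨i, hi, h⟩ := ih hn
      exact ⟨i, hi.trans n.lt_succ_self, h⟩

structure IsPartition (N : ℕ) (q : ℕ → ℝ) : Prop where
  zero : q 0 = 0
  last : q N = 1
  lt_succ : ∀ i < N, q i < q (i + 1)

/-- The index `i` of the cell `[q i, q (i + 1))` containing `t`; it is `N` for `t ≥ q N`. -/
def cell (N : ℕ) (q : ℕ → ℝ) (t : ℝ) : ℕ := Nat.findGreatest (fun i => q i ≤ t) N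

def stepFunction (N : ℕ) (q r : ℕ → ℝ) (t : unitI) : ℝ := r (cell N q t)

namespace IsPartition

variable {N : ℕ} {q : ℕ → ℝ}

theorem strictMonoOn (hq : IsPartition N q) : StrictMonoOn q (Iic N) :=
  strictMonoOn_Iic_of_lt_succ hq.lt_succ

theorem le_of_le (hq : IsPartition N q) {i j : ℕ} (hij : i ≤ j) (hj : j ≤ N) : q i ≤ q j :=
  hq.strictMonoOn.monotoneOn (mem_Iic.2 (hij.trans hj)) (mem_Iic.2 hj) hij

theorem mem_Icc (hq : IsPartition N q) {i : ℕ} (hi : i ≤ N) : q i ∈ Icc (0 : ℝ) 1 := by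
  rw [← hq.zero, ← hq.last]
  exact ⟨hq.le_of_le (Nat.zero_le i) hi, hq.le_of_le hi le_rfl⟩

theorem pos (hq : IsPartition N q) : 0 < N := by
  refine Nat.pos_of_ne_zero fun h => ?_
  have := hq.last
  rw [h, hq.zero] at this
  exact zero_ne_one this

theorem exists_mem_Ico (hq : IsPartition N q) {t : ℝ} (ht : t ∈ Ico (0 : ℝ) 1) :
    ∃ i < N, t ∈ Ico (q i) (q (i + 1)) := by
  obtain ⟨i, hi, h1, h2⟩ := Nat.exists_lt_and_not_succ (p := fun i => q i ≤ t)
    (by rw [hq.zero]; exact ht.1) (by rw [hq.last]; exact not_le.2 ht.2)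
  exact ⟨i, hi, h1, not_le.1 h2⟩

theorem exists_mem_Ioc (hq : IsPartition N q) {t : ℝ} (ht : t ∈ Ioc (0 : ℝ) 1) :
    ∃ i < N, t ∈ Ioc (q i) (q (i + 1)) := by
  obtain ⟨i, hi, h1, h2⟩ := Nat.exists_lt_and_not_succ (p := fun i => q i < t)
    (by rw [hq.zero]; exact ht.1) (by rw [hq.last]; exact not_lt.2 ht.2)
  exact ⟨i, hi, h1, not_lt.1 h2⟩

theorem cell_eq (hq : IsPartition N q) {i : ℕ} (hi : i < N) {t : ℝ}
    (ht : t ∈ Ico (q i) (q (i + 1))) : cell N q t = i := by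
  refine Nat.findGreatest_eq_iff.2 ⟨hi.le, fun _ => ht.1, fun n hin hnN => not_le.2 ?_⟩
  exact ht.2.trans_le (hq.le_of_le hin hnN)

end IsPartition

theorem cell_of_le {N : ℕ} {q : ℕ → ℝ} {t : ℝ} (ht : q N ≤ t) : cell N q t = N :=
  Nat.findGreatest_eq ht

theorem cell_congr {N : ℕ} {q q' : ℕ → ℝ} (h : EqOn q q' (Iic N)) (t : ℝ) :
    cell N q t = cell N q' t := by
  obtain ⟨hle, hpos, hmax⟩ := Nat.findGreatest_eq_iff.1 (rfl : cell N q t = _)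
  refine (Nat.findGreatest_eq_iff.2 ?_).symm
  refine ⟨hle, fun h0 => ?_, fun n hn hnN => ?_⟩
  · rw [← h (mem_Iic.2 hle)]; exact hpos h0
  · rw [← h (mem_Iic.2 hnN)]; exact hmax hn hnN

theorem stepFunction_congr {N : ℕ} {q q' r r' : ℕ → ℝ} (hq : EqOn q q' (Iic N))
    (hr : EqOn r r' (Iic N)) : stepFunction N q r = stepFunction N q' r' := by
  funext t
  rw [stepFunction, stepFunction, ← cell_congr hq]
  exact hr (mem_Iic.2 (Nat.findGreatest_le N))

theorem cadlag_of_eventuallyEq {g : unitI → ℝ}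
    (hr : ∀ t : unitI, (t : ℝ) < 1 → ∀ᶠ s in 𝓝[>] t, g s = g t)
    (hl : ∀ t : unitI, 0 < (t : ℝ) → ∃ c, ∀ᶠ s in 𝓝[<] t, g s = c) : Cadlag g := by
  refine ⟨fun t => tendsto_const_nhds.congr' ?_, fun t => ?_⟩
  · rcases t.2.2.lt_or_eq with ht | ht
    · exact (hr t ht).mono fun s hs => hs.symm
    · filter_upwards [self_mem_nhdsWithin] with s hs
      exact (not_le.2 hs (s.2.2.trans_eq ht.symm)).elim
  · rcases t.2.1.lt_or_eq with ht | ht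
    · obtain ⟨c, hc⟩ := hl t ht
      exact ⟨c, tendsto_const_nhds.congr' (hc.mono fun s hs => hs.symm)⟩
    · refine ⟨0, tendsto_const_nhds.congr' ?_⟩
      filter_upwards [self_mem_nhdsWithin] with s hs
      exact (not_le.2 hs (ht.symm.trans_le s.2.1)).elim

theorem cadlag_stepFunction {N : ℕ} {q : ℕ → ℝ} (hq : IsPartition N q) (r : ℕ → ℝ) :
    Cadlag (stepFunction N q r) := by
  have hgt (t : unitI) : Tendsto Subtype.val (𝓝[>] t) (𝓝[>] (t : ℝ)) :=
    continuous_subtype_val.continuousWithinAt.tendsto_nhdsWithin fun _ h => h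
  have hlt (t : unitI) : Tendsto Subtype.val (𝓝[<] t) (𝓝[<] (t : ℝ)) :=
    continuous_subtype_val.continuousWithinAt.tendsto_nhdsWithin fun _ h => h
  refine cadlag_of_eventuallyEq (fun t ht => ?_) (fun t ht => ?_)
  · obtain ⟨i, hi, hti⟩ := hq.exists_mem_Ico ⟨t.2.1, ht⟩
    have : ∀ᶠ s in 𝓝[>] (t : ℝ), cell N q s = i := by
      filter_upwards [Ioo_mem_nhdsGT hti.2] with s hs
      exact hq.cell_eq hi ⟨hti.1.trans hs.1.le, hs.2⟩
    filter_upwards [hgt t this] with s hs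
    rw [stepFunction, stepFunction, hs, hq.cell_eq hi hti]
  · obtain ⟨i, hi, hti⟩ := hq.exists_mem_Ioc ⟨ht, t.2.2⟩
    have : ∀ᶠ s in 𝓝[<] (t : ℝ), cell N q s = i := by
      filter_upwards [Ioo_mem_nhdsLT hti.1] with s hs
      exact hq.cell_eq hi ⟨hs.1.le, hs.2.trans_le hti.2⟩
    refine ⟨r i, ?_⟩
    filter_upwards [hlt t this] with s hs
    rw [stepFunction, hs]

def rationalStepFunctions : Set D :=
  {g | ∃ (N : ℕ) (q r : ℕ → ℚ), g.1 = stepFunction N (fun i => q i) (fun i => r i)}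

theorem countable_rationalStepFunctions : rationalStepFunctions.Countable := by
  let E : (Σ N : ℕ, (Fin (N + 1) → ℚ) × (Fin (N + 1) → ℚ)) → unitI → ℝ :=
    fun d => stepFunction d.1 (fun i => d.2.1 (Fin.ofNat _ i)) (fun i => d.2.2 (Fin.ofNat _ i))
  refine ((countable_range E).preimage Subtype.val_injective).mono ?_
  rintro g ⟨N, q, r, hg⟩
  have hcast : ∀ i ∈ Iic N, (Fin.ofNat (N + 1) i : ℕ) = i := fun i hi =>
    Nat.mod_eq_of_lt (Nat.lt_succ_of_le hi)
  refine ⟨⟨N, fun j => q j, fun j => r j⟩, hg ▸ stepFunction_congr ?_ ?_⟩ <;>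
    intro i hi <;> simp only [hcast i hi]

instance : Nonempty unitI := ⟨i0⟩

theorem dJ1_le_of_timeChange {f g : D} {l : unitI → unitI} (hl : TimeChange l) {a b : ℝ}
    (hfg : ∀ t, |f.1 (l t) - g.1 t| ≤ a) (hlt : ∀ t : unitI, |(l t : ℝ) - t| ≤ b) :
    dJ1 f g ≤ a + b := by
  have hbdd : BddBelow {x : ℝ | ∃ l : unitI → unitI, TimeChange l ∧
      x = (⨆ t : unitI, |f.1 (l t) - g.1 t|) + ⨆ t : unitI, |(l t : ℝ) - (t : ℝ)|} := by
    refine ⟨0, ?_⟩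
    rintro x ⟨l, -, rfl⟩
    exact add_nonneg (Real.iSup_nonneg fun _ => abs_nonneg _)
      (Real.iSup_nonneg fun _ => abs_nonneg _)
  exact (csInf_le hbdd ⟨l, hl, rfl⟩).trans (add_le_add (ciSup_le hfg) (ciSup_le hlt))

theorem exists_timeChange_of_strictMonoOn {φ : ℝ → ℝ} (hc : ContinuousOn φ (Icc 0 1))
    (hm : StrictMonoOn φ (Icc 0 1)) (h0 : φ 0 = 0) (h1 : φ 1 = 1) :
    ∃ l : unitI → unitI, TimeChange l ∧ ∀ t, (l t : ℝ) = φ t := by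
  have hmaps : MapsTo φ (Icc 0 1) (Icc 0 1) := fun t ht => by
    rw [← h0, ← h1]
    exact ⟨hm.monotoneOn (left_mem_Icc.2 zero_le_one) ht ht.1,
      hm.monotoneOn ht (right_mem_Icc.2 zero_le_one) ht.2⟩
  have hsm : StrictMono hmaps.restrict := fun s t hst => hm s.2 t.2 hst
  refine ⟨hmaps.restrict, ⟨hsm, hsm.injective, fun y => ?_⟩, fun _ => rfl⟩
  obtain ⟨x, hx, hxy⟩ := intermediate_value_Icc zero_le_one hc (by rw [h0, h1]; exact y.2)
  exact ⟨⟨x, hx⟩, Subtype.ext hxy⟩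

/-- The piecewise linear map sending `q i` to `u i` for `i ≤ N`, written as a sum of
one ramp per cell so that it is visibly continuous and monotone. -/
def pwLinear (N : ℕ) (q u : ℕ → ℝ) (t : ℝ) : ℝ :=
  ∑ j ∈ Finset.range N,
    (u (j + 1) - u j) / (q (j + 1) - q j) * (max (q j) (min (q (j + 1)) t) - q j)

theorem continuous_pwLinear (N : ℕ) (q u : ℕ → ℝ) : Continuous (pwLinear N q u) := by
  unfold pwLinear; fun_prop

section pwLinear

variable {N : ℕ} {q u : ℕ → ℝ}

theorem monotone_pwLinear (hq : IsPartition N q) (hu : IsPartition N u) :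
    Monotone (pwLinear N q u) := fun s t hst =>
  Finset.sum_le_sum fun j hj =>
    have hj : j < N := Finset.mem_range.1 hj
    mul_le_mul_of_nonneg_left (by gcongr)
      (div_nonneg (sub_nonneg.2 (hu.lt_succ j hj).le) (sub_nonneg.2 (hq.lt_succ j hj).le))

theorem pwLinear_eq (hq : IsPartition N q) (hu0 : u 0 = 0) {i : ℕ} (hi : i < N) {t : ℝ}
    (ht : t ∈ Icc (q i) (q (i + 1))) :
    pwLinear N q u t = u i + (u (i + 1) - u i) / (q (i + 1) - q i) * (t - q i) := by
  have hlow : ∀ j ∈ Finset.range i, (u (j + 1) - u j) / (q (j + 1) - q j) *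
      (max (q j) (min (q (j + 1)) t) - q j) = u (j + 1) - u j := by
    intro j hj
    have hj : j < i := Finset.mem_range.1 hj
    rw [min_eq_left ((hq.le_of_le hj (by omega)).trans ht.1),
      max_eq_right (hq.le_of_le j.le_succ (by omega)),
      div_mul_cancel₀ _ (sub_ne_zero.2 (hq.lt_succ j (by omega)).ne')]
  have hhigh : ∀ j ∈ Finset.Ico (i + 1) N, (u (j + 1) - u j) / (q (j + 1) - q j) *
      (max (q j) (min (q (j + 1)) t) - q j) = 0 := by
    intro j hj
    obtain ⟨hij, hjN⟩ := Finset.mem_Ico.1 hj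
    rw [min_eq_right (ht.2.trans (hq.le_of_le (by omega) (by omega))),
      max_eq_left (ht.2.trans (hq.le_of_le hij hjN.le)), sub_self, mul_zero]
  rw [pwLinear, ← Finset.sum_range_add_sum_Ico _ hi, Finset.sum_range_succ,
    Finset.sum_congr rfl hlow, Finset.sum_range_sub, Finset.sum_eq_zero hhigh,
    min_eq_right ht.2, max_eq_right ht.1, hu0]
  ring

theorem pwLinear_node (hq : IsPartition N q) (hu0 : u 0 = 0) {i : ℕ} (hi : i ≤ N) :
    pwLinear N q u (q i) = u i := by
  rcases hi.lt_or_eq with hi | rfl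
  · rw [pwLinear_eq hq hu0 hi ⟨le_rfl, (hq.lt_succ i hi).le⟩]
    ring
  · obtain ⟨M, rfl⟩ : ∃ M, i = M + 1 := ⟨i - 1, by have := hq.pos; omega⟩
    have hM := hq.lt_succ M M.lt_succ_self
    rw [pwLinear_eq hq hu0 M.lt_succ_self ⟨hM.le, le_rfl⟩,
      div_mul_cancel₀ _ (sub_ne_zero.2 hM.ne')]
    ring

theorem pwLinear_zero (hq : IsPartition N q) (hu : IsPartition N u) : pwLinear N q u 0 = 0 := by
  simpa only [hq.zero, hu.zero] using pwLinear_node hq hu.zero (Nat.zero_le N)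

theorem pwLinear_one (hq : IsPartition N q) (hu : IsPartition N u) : pwLinear N q u 1 = 1 := by
  simpa only [hq.last, hu.last] using pwLinear_node hq hu.zero (le_refl N)

theorem strictMonoOn_pwLinear (hq : IsPartition N q) (hu : IsPartition N u) :
    StrictMonoOn (pwLinear N q u) (Icc 0 1) := by
  intro s hs t ht hst
  obtain ⟨i, hi, hsi⟩ := hq.exists_mem_Ico ⟨hs.1, hst.trans_le ht.2⟩
  have hslope : 0 < (u (i + 1) - u i) / (q (i + 1) - q i) :=
    div_pos (sub_pos.2 (hu.lt_succ i hi)) (sub_pos.2 (hq.lt_succ i hi))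
  have ht' : min t (q (i + 1)) ∈ Icc (q i) (q (i + 1)) :=
    ⟨le_min (hsi.1.trans hst.le) (hq.lt_succ i hi).le, min_le_right _ _⟩
  calc pwLinear N q u s = u i + (u (i + 1) - u i) / (q (i + 1) - q i) * (s - q i) :=
        pwLinear_eq hq hu.zero hi ⟨hsi.1, hsi.2.le⟩
    _ < u i + (u (i + 1) - u i) / (q (i + 1) - q i) * (min t (q (i + 1)) - q i) := by
        gcongr; exact lt_min hst hsi.2
    _ = pwLinear N q u (min t (q (i + 1))) := (pwLinear_eq hq hu.zero hi ht').symm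
    _ ≤ pwLinear N q u t := monotone_pwLinear hq hu (min_le_left _ _)

theorem abs_pwLinear_sub_le (hq : IsPartition N q) (hu : IsPartition N u) {δ : ℝ}
    (hδ : ∀ i ≤ N, |u i - q i| ≤ δ) {t : ℝ} (ht : t ∈ Icc (0 : ℝ) 1) :
    |pwLinear N q u t - t| ≤ δ := by
  rcases ht.2.lt_or_eq with ht1 | rfl
  · obtain ⟨i, hi, hti⟩ := hq.exists_mem_Ico ⟨ht.1, ht1⟩
    have hgap : 0 < q (i + 1) - q i := sub_pos.2 (hq.lt_succ i hi)
    set θ := (t - q i) / (q (i + 1) - q i)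
    have hθ : θ ∈ Icc (0 : ℝ) 1 := ⟨div_nonneg (sub_nonneg.2 hti.1) hgap.le,
      (div_le_one hgap).2 (by linarith [hti.2])⟩
    -- on a cell, `pwLinear - id` interpolates linearly between the displacements at its ends
    have hcomb :
        pwLinear N q u t - t = (1 - θ) * (u i - q i) + θ * (u (i + 1) - q (i + 1)) := by
      rw [pwLinear_eq hq hu.zero hi ⟨hti.1, hti.2.le⟩]
      simp only [θ]
      field_simp
      ring
    rw [hcomb, abs_le]
    exact convex_Icc (-δ) δ (abs_le.1 (hδ i hi.le)) (abs_le.1 (hδ (i + 1) hi))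
      (sub_nonneg.2 hθ.2) hθ.1 (sub_add_cancel 1 θ)
  · rw [pwLinear_one hq hu, sub_self, abs_zero]
    exact (abs_nonneg _).trans (hδ 0 (Nat.zero_le N))

theorem cell_pwLinear (hq : IsPartition N q) (hu : IsPartition N u) {t : ℝ}
    (ht : t ∈ Icc (0 : ℝ) 1) : cell N u (pwLinear N q u t) = cell N q t := by
  rcases ht.2.lt_or_eq with ht1 | rfl
  · obtain ⟨i, hi, hti⟩ := hq.exists_mem_Ico ⟨ht.1, ht1⟩
    rw [hq.cell_eq hi hti]
    refine hu.cell_eq hi ⟨?_, ?_⟩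
    · rw [← pwLinear_node hq hu.zero hi.le]
      exact monotone_pwLinear hq hu hti.1
    · rw [← pwLinear_node hq hu.zero hi]
      exact strictMonoOn_pwLinear hq hu ht (hq.mem_Icc hi) hti.2
  · rw [pwLinear_one hq hu, cell_of_le hu.last.le, cell_of_le hq.last.le]

theorem IsPartition.exists_timeChange (hq : IsPartition N q) (hu : IsPartition N u) {δ : ℝ}
    (hδ : ∀ i ≤ N, |u i - q i| ≤ δ) :
    ∃ l : unitI → unitI, TimeChange l ∧ (∀ t : unitI, |(l t : ℝ) - t| ≤ δ) ∧
      ∀ t : unitI, cell N u (l t) = cell N q t := by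
  obtain ⟨l, hl, hlφ⟩ := exists_timeChange_of_strictMonoOn (continuous_pwLinear N q u).continuousOn
    (strictMonoOn_pwLinear hq hu) (pwLinear_zero hq hu) (pwLinear_one hq hu)
  exact ⟨l, hl, fun t => hlφ t ▸ abs_pwLinear_sub_le hq hu hδ t.2,
    fun t => hlφ t ▸ cell_pwLinear hq hu t.2⟩

end pwLinear

theorem IsPartition.exists_rational_near {N : ℕ} {u : ℕ → ℝ} (hu : IsPartition N u) {δ : ℝ}
    (hδ : 0 < δ) : ∃ q : ℕ → ℚ, IsPartition N (fun i => q i) ∧ ∀ i ≤ N, |u i - q i| ≤ δ := by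
  have hsmall : ∀ᶠ η in 𝓝 (0 : ℝ), η < δ ∧ ∀ i ∈ Finset.range N, η < (u (i + 1) - u i) / 2 :=
    (eventually_lt_nhds hδ).and <| (Finset.eventually_all _).2 fun i hi =>
      eventually_lt_nhds (half_pos (sub_pos.2 (hu.lt_succ i (Finset.mem_range.1 hi))))
  obtain ⟨η, ⟨hηδ, hgap⟩, hη⟩ :=
    ((hsmall.filter_mono nhdsWithin_le_nhds).and (self_mem_nhdsWithin (s := Ioi 0))).exists
  choose c hc using fun i => exists_rat_near (u i) hη
  -- the endpoints `0` and `1` are already rational, so they are kept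
  let q : ℕ → ℚ := fun i => if i = 0 then 0 else if i = N then 1 else c i
  have hqu : ∀ i ≤ N, |u i - q i| < η := by
    intro i hi
    by_cases h0 : i = 0
    · simp [q, h0, hu.zero, hη]
    by_cases hN : i = N
    · simp [q, hN, hu.last, hu.pos.ne', hη]
    simpa [q, h0, hN] using hc i
  refine ⟨q, ⟨by simp [q], by simp [q, hu.pos.ne'], fun i hi => ?_⟩,
    fun i hi => (hqu i hi).le.trans hηδ.le⟩
  have h1 := abs_lt.1 (hqu i hi.le)
  have h2 := abs_lt.1 (hqu (i + 1) hi)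
  linarith [hgap i (Finset.mem_range.2 hi)]

def HasOscPartition (F : ℝ → ℝ) (ε t : ℝ) : Prop :=
  ∃ (N : ℕ) (u : ℕ → ℝ), u 0 = 0 ∧ u N = t ∧ (∀ i < N, u i < u (i + 1)) ∧
    ∀ i < N, ∀ s ∈ Ico (u i) (u (i + 1)), dist (F s) (F (u i)) < ε

section oscillation

variable {F : ℝ → ℝ} {ε : ℝ}

theorem hasOscPartition_zero : HasOscPartition F ε 0 :=
  ⟨0, fun _ => 0, rfl, rfl, fun _ h => absurd h (Nat.not_lt_zero _),
    fun _ h => absurd h (Nat.not_lt_zero _)⟩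

theorem HasOscPartition.extend {a b : ℝ} (ha : HasOscPartition F ε a) (hab : a < b)
    (hosc : ∀ s ∈ Ico a b, dist (F s) (F a) < ε) : HasOscPartition F ε b := by
  obtain ⟨N, u, h0, hN, hmono, ho⟩ := ha
  have hu : ∀ i ≤ N, Function.update u (N + 1) b i = u i := fun i hi =>
    Function.update_of_ne (by omega) _ _
  refine ⟨N + 1, Function.update u (N + 1) b, by rw [hu 0 (Nat.zero_le N), h0],
    Function.update_self .., fun i hi => ?_, fun i hi => ?_⟩
  · rcases (Nat.lt_succ_iff.1 hi).lt_or_eq with hi | rfl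
    · rw [hu i hi.le, hu (i + 1) hi]; exact hmono i hi
    · rw [hu i le_rfl, Function.update_self, hN]; exact hab
  · rcases (Nat.lt_succ_iff.1 hi).lt_or_eq with hi | rfl
    · rw [hu i hi.le, hu (i + 1) hi]; exact ho i hi
    · rw [hu i le_rfl, Function.update_self, hN]; exact hosc

theorem HasOscPartition.of_tendsto_nhdsLT {τ L : ℝ} (hL : Tendsto F (𝓝[<] τ) (𝓝 L)) (hε : 0 < ε)
    (h : ∀ l < τ, ∃ a ∈ Ioc l τ, HasOscPartition F ε a) : HasOscPartition F ε τ := by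
  obtain ⟨l, hlτ, hsub⟩ :=
    mem_nhdsLT_iff_exists_Ioo_subset.1 (hL (Metric.ball_mem_nhds L (half_pos hε)))
  obtain ⟨a, ⟨hla, haτ⟩, ha⟩ := h l hlτ
  rcases haτ.lt_or_eq with haτ | rfl
  · refine ha.extend haτ fun s hs => ?_
    calc dist (F s) (F a) ≤ dist (F s) L + dist (F a) L := dist_triangle_right _ _ _
      _ < ε / 2 + ε / 2 := add_lt_add (hsub ⟨hla.trans_le hs.1, hs.2⟩) (hsub ⟨hla, haτ⟩)
      _ = ε := add_halves ε
  · exact ha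

theorem HasOscPartition.exists_gt {τ b : ℝ} (h : HasOscPartition F ε τ)
    (hr : Tendsto F (𝓝[>] τ) (𝓝 (F τ))) (hε : 0 < ε) (hτb : τ < b) :
    ∃ c ∈ Ioc τ b, HasOscPartition F ε c := by
  obtain ⟨c', hτc', hsub⟩ :=
    mem_nhdsGT_iff_exists_Ioo_subset.1 (hr (Metric.ball_mem_nhds _ hε))
  obtain ⟨c, hτc, hc⟩ := exists_between (lt_min hτb hτc')
  refine ⟨c, ⟨hτc, hc.le.trans (min_le_left _ _)⟩, h.extend hτc fun s hs => ?_⟩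
  rcases hs.1.eq_or_lt with rfl | hτs
  · rwa [dist_self]
  · exact hsub ⟨hτs, hs.2.trans (hc.trans_le (min_le_right _ _))⟩

theorem hasOscPartition_one (hr : ∀ x ∈ Ico (0 : ℝ) 1, Tendsto F (𝓝[>] x) (𝓝 (F x)))
    (hl : ∀ x ∈ Ioc (0 : ℝ) 1, ∃ L, Tendsto F (𝓝[<] x) (𝓝 L)) (hε : 0 < ε) :
    HasOscPartition F ε 1 := by
  set A := {t ∈ Icc (0 : ℝ) 1 | HasOscPartition F ε t}
  have hA0 : (0 : ℝ) ∈ A := ⟨left_mem_Icc.2 zero_le_one, hasOscPartition_zero⟩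
  have hbdd : BddAbove A := ⟨1, fun t ht => ht.1.2⟩
  have hτ : sSup A ∈ Icc (0 : ℝ) 1 := ⟨le_csSup hbdd hA0, csSup_le ⟨0, hA0⟩ fun t ht => ht.1.2⟩
  have hτA : HasOscPartition F ε (sSup A) := by
    rcases hτ.1.eq_or_lt with h | h
    · rw [← h]; exact hasOscPartition_zero
    obtain ⟨L, hL⟩ := hl _ ⟨h, hτ.2⟩
    refine HasOscPartition.of_tendsto_nhdsLT hL hε fun l hl => ?_
    obtain ⟨a, haA, hla⟩ := exists_lt_of_lt_csSup ⟨0, hA0⟩ hl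
    exact ⟨a, ⟨hla, le_csSup hbdd haA⟩, haA.2⟩
  rcases hτ.2.lt_or_eq with h | h
  · obtain ⟨c, hc, hcA⟩ := hτA.exists_gt (hr _ ⟨hτ.1, h⟩) hε h
    exact absurd (le_csSup hbdd ⟨⟨hτ.1.trans hc.1.le, hc.2⟩, hcA⟩) (not_le.2 hc.1)
  · rwa [← h]

end oscillation

namespace Cadlag

variable {f : unitI → ℝ}

theorem tendsto_IccExtend_nhdsGT (hf : Cadlag f) {x : ℝ} (hx : x ∈ Ico (0 : ℝ) 1) :
    Tendsto (IccExtend zero_le_one f) (𝓝[>] x) (𝓝 (IccExtend zero_le_one f x)) := by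
  refine (hf.1 _).comp (continuous_projIcc.continuousWithinAt.tendsto_nhdsWithin fun y hy => ?_)
  show (projIcc 0 1 zero_le_one x : ℝ) < projIcc 0 1 zero_le_one y
  rw [projIcc_of_mem _ (Ico_subset_Icc_self hx)]
  exact lt_max_of_lt_right (lt_min hx.2 hy)

theorem exists_tendsto_IccExtend_nhdsLT (hf : Cadlag f) {x : ℝ} (hx : x ∈ Ioc (0 : ℝ) 1) :
    ∃ L, Tendsto (IccExtend zero_le_one f) (𝓝[<] x) (𝓝 L) := by
  obtain ⟨L, hL⟩ := hf.2 (projIcc 0 1 zero_le_one x)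
  refine ⟨L, hL.comp (continuous_projIcc.continuousWithinAt.tendsto_nhdsWithin fun y hy => ?_)⟩
  show (projIcc 0 1 zero_le_one y : ℝ) < projIcc 0 1 zero_le_one x
  rw [projIcc_of_mem _ (Ioc_subset_Icc_self hx)]
  exact max_lt hx.1 (min_lt_of_right_lt hy)

theorem exists_stepFunction_near (hf : Cadlag f) {ε : ℝ} (hε : 0 < ε) :
    ∃ (N : ℕ) (u v : ℕ → ℝ), IsPartition N u ∧ ∀ t, |f t - stepFunction N u v t| < ε := by
  obtain ⟨N, u, h0, h1, hmono, hosc⟩ := hasOscPartition_one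
    (fun x hx => hf.tendsto_IccExtend_nhdsGT hx)
    (fun x hx => hf.exists_tendsto_IccExtend_nhdsLT hx) hε
  have hu : IsPartition N u := ⟨h0, h1, hmono⟩
  refine ⟨N, u, fun i => IccExtend zero_le_one f (u i), hu, fun t => ?_⟩
  rw [stepFunction, ← IccExtend_val zero_le_one f t]
  rcases t.2.2.lt_or_eq with ht | ht
  · obtain ⟨i, hi, hti⟩ := hu.exists_mem_Ico ⟨t.2.1, ht⟩
    rw [hu.cell_eq hi hti, ← Real.dist_eq]
    exact hosc i hi t hti
  · rw [cell_of_le (hu.last.trans ht.symm).le, hu.last, ht, sub_self, abs_zero]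
    exact hε

end Cadlag

/-- `(D, d_{J1})` is separable: there is a countable subset of `D`
that is dense for the metric `d_{J1}`. -/
theorem dJ1_separable :
    ∃ S : Set D, S.Countable ∧ ∀ f : D, ∀ ε : ℝ, 0 < ε → ∃ g ∈ S, dJ1 f g < ε := by
  refine ⟨rationalStepFunctions, countable_rationalStepFunctions, fun f ε hε => ?_⟩
  obtain ⟨N, u, v, hu, hfv⟩ := f.2.exists_stepFunction_near (ε := ε / 4) (by positivity)
  obtain ⟨q, hq, hqu⟩ := hu.exists_rational_near (δ := ε / 4) (by positivity)
  choose r hr using fun i => exists_rat_near (v i) (show 0 < ε / 4 by positivity)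
  obtain ⟨l, hl, hlt, hcell⟩ := hq.exists_timeChange hu hqu
  let g : D := ⟨stepFunction N (fun i => q i) (fun i => r i), cadlag_stepFunction hq _⟩
  have hfg : ∀ t, |f.1 (l t) - g.1 t| ≤ ε / 2 := fun t => by
    have hv : stepFunction N u v (l t) = v (cell N (fun i => q i) t) := by
      rw [stepFunction, hcell]
    calc |f.1 (l t) - g.1 t|
        ≤ |f.1 (l t) - stepFunction N u v (l t)| + |v (cell N (fun i => q i) t) - r _| := by
          rw [← hv]; exact abs_sub_le _ _ _
      _ ≤ ε / 2 := by linarith [hfv (l t), hr (cell N (fun i => q i) t)]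
  exact ⟨g, ⟨N, q, r, rfl⟩, (dJ1_le_of_timeChange hl hfg hlt).trans_lt (by linarith)⟩
end
end
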